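/- The quadratrix is not algebraic: there is no nonzero polynomial P ∈ ℝ[x,y] such that P(θ, (2a θ)/(π tan θ)) = 0 for all θ in a nonempty open interval around 0 (with the value at 0 taken as 2a/π), where a > 0. -/

import Mathlib

open MvPolynomial


private lemma analyticAt_csin (z : ℂ) : AnalyticAt ℂ Complex.sin z := by
  have : Complex.sin = fun z => (Complex.exp (-z * Complex.I) - Complex.exp (z * Complex.I)) * Complex.I / 2 := by
    funext w; rfl
  rw [this]
  exact (((analyticAt_cexp.comp ((analyticAt_id.neg).mul analyticAt_const)).sub
    (analyticAt_cexp.comp (analyticAt_id.mul analyticAt_const))).mul analyticAt_const).div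
    analyticAt_const (by norm_num)

private lemma analyticAt_rsin (x : ℝ) : AnalyticAt ℝ Real.sin x := by
  have h1 : AnalyticAt ℝ (fun t : ℝ => Complex.sin t) x :=
    ((analyticAt_csin _).restrictScalars).comp (Complex.ofRealCLM.analyticAt x)
  have h2 : Real.sin = fun t : ℝ => (Complex.reCLM) (Complex.sin t) := by
    funext t; simp [Real.sin]
  rw [h2]
  exact (Complex.reCLM.analyticAt _).comp h1

private lemma analyticAt_rcos (x : ℝ) : AnalyticAt ℝ Real.cos x := by
  have hc : ∀ z : ℂ, AnalyticAt ℂ Complex.cos z := by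
    intro z
    have : Complex.cos = fun z => (Complex.exp (z * Complex.I) + Complex.exp (-z * Complex.I)) / 2 := by
      funext w; rfl
    rw [this]
    exact ((analyticAt_cexp.comp (analyticAt_id.mul analyticAt_const)).add
      (analyticAt_cexp.comp ((analyticAt_id.neg).mul analyticAt_const))).div
      analyticAt_const (by norm_num)
  have h1 : AnalyticAt ℝ (fun t : ℝ => Complex.cos t) x :=
    ((hc _).restrictScalars).comp (Complex.ofRealCLM.analyticAt x)
  have h2 : Real.cos = fun t : ℝ => (Complex.reCLM) (Complex.cos t) := by
    funext t; simp [Real.cos]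
  rw [h2]
  exact (Complex.reCLM.analyticAt _).comp h1

private lemma analyticAt_mveval (c : MvPolynomial (Fin 1) ℝ) (x : ℝ) :
    AnalyticAt ℝ (fun t : ℝ => MvPolynomial.eval ![t] c) x := by
  induction c using MvPolynomial.induction_on with
  | C a => simpa using (analyticAt_const : AnalyticAt ℝ (fun _ : ℝ => a) x)
  | add p q hp hq => simpa using hp.fun_add hq
  | mul_X p i hp =>
      have : (fun t : ℝ => MvPolynomial.eval ![t] (p * X i)) =
          fun t : ℝ => MvPolynomial.eval ![t] p * t := by
        funext t
        simp [Fin.eq_zero i]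
      rw [this]
      exact hp.mul analyticAt_id

private lemma mv1_eq_zero (c : MvPolynomial (Fin 1) ℝ)
    (h : ∀ k : ℕ, MvPolynomial.eval ![((k : ℝ) + 1) * Real.pi] c = 0) : c = 0 := by
  set q : Polynomial ℝ := MvPolynomial.aeval (fun _ : Fin 1 => Polynomial.X) c with hq
  clear_value q
  have hqe : ∀ t : ℝ, Polynomial.eval t q = MvPolynomial.eval ![t] c := by
    intro t
    rw [hq]
    clear h hq
    induction c using MvPolynomial.induction_on with
    | C a => simp
    | add p r hp hr => simp_all
    | mul_X p i hp => simp_all [Fin.eq_zero i]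
  have hq0 : q = 0 := by
    apply Polynomial.eq_zero_of_infinite_isRoot
    apply Set.infinite_of_injective_forall_mem
      (f := fun k : ℕ => ((k : ℝ) + 1) * Real.pi) ?_ ?_
    · intro i j hij
      have : ((i : ℝ) + 1) = (j : ℝ) + 1 :=
        mul_right_cancel₀ Real.pi_ne_zero hij
      exact_mod_cast add_left_injective 1 this
    · intro k
      simp only [Set.mem_setOf_eq, Polynomial.IsRoot, hqe]
      exact h k
  have : ∀ t : ℝ, MvPolynomial.eval ![t] c = 0 := by
    intro t; rw [← hqe, hq0]; simp
  apply MvPolynomial.funext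
  intro x
  have hx : x = ![x 0] := by
    funext i; fin_cases i; simp
  rw [hx, this, map_zero]

private lemma key (a ε : ℝ) (ha : 0 < a) (hε : 0 < ε)
    (p : Polynomial (MvPolynomial (Fin 1) ℝ))
    (h : ∀ θ : ℝ, 0 < θ → θ < min ε (Real.pi / 2) →
      Polynomial.eval (2 * a * θ / (Real.pi * Real.tan θ))
        (p.map (MvPolynomial.eval ![θ])) = 0) :
    p = 0 := by
  set n := p.natDegree with hn
  set Q : ℝ → ℝ := fun θ => ∑ j ∈ Finset.range (n + 1),
    MvPolynomial.eval ![θ] (p.coeff j) * (2 * a * θ * Real.cos θ / Real.pi) ^ j *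
      Real.sin θ ^ (n - j) with hQ
  set δ : ℝ := min ε (Real.pi / 2) with hδ
  have hδ0 : 0 < δ := lt_min hε (by positivity)
  -- Step A : Q vanishes on (0, δ)
  have hQ0 : ∀ θ ∈ Set.Ioo (0:ℝ) δ, Q θ = 0 := by
    rintro θ ⟨h1, h2⟩
    have hθπ2 : θ < Real.pi / 2 := lt_of_lt_of_le h2 (min_le_right _ _)
    have hsin : 0 < Real.sin θ :=
      Real.sin_pos_of_pos_of_lt_pi h1 (hθπ2.trans (by linarith [Real.pi_pos]))
    have hcos : 0 < Real.cos θ :=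
      Real.cos_pos_of_mem_Ioo ⟨by linarith [Real.pi_pos], hθπ2⟩
    set f : ℝ := 2 * a * θ / (Real.pi * Real.tan θ) with hf
    have hfs : f * Real.sin θ = 2 * a * θ * Real.cos θ / Real.pi := by
      rw [hf, Real.tan_eq_sin_div_cos]
      field_simp
    have hh := h θ h1 h2
    have heval : Polynomial.eval f (p.map (MvPolynomial.eval ![θ])) =
        ∑ j ∈ Finset.range (n + 1), MvPolynomial.eval ![θ] (p.coeff j) * f ^ j := by
      rw [Polynomial.eval_eq_sum_range'
        (Nat.lt_succ_of_le Polynomial.natDegree_map_le)]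
      simp [Polynomial.coeff_map]
      rfl
    calc Q θ = ∑ j ∈ Finset.range (n + 1),
        MvPolynomial.eval ![θ] (p.coeff j) * f ^ j * Real.sin θ ^ n := by
          apply Finset.sum_congr rfl
          intro j hj
          have hjn : j ≤ n := Nat.lt_succ_iff.mp (Finset.mem_range.mp hj)
          have hpow : Real.sin θ ^ j * Real.sin θ ^ (n - j) = Real.sin θ ^ n := by
            rw [← pow_add, Nat.add_sub_cancel' hjn]
          rw [← hfs, mul_pow, ← hpow]
          ring
      _ = (∑ j ∈ Finset.range (n + 1), MvPolynomial.eval ![θ] (p.coeff j) * f ^ j) *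
            Real.sin θ ^ n := by rw [Finset.sum_mul]
      _ = 0 := by rw [← heval, hh, zero_mul]
  -- Step B : Q is analytic on all of ℝ
  have hQa : ∀ x : ℝ, AnalyticAt ℝ Q x := by
    intro x
    apply Finset.analyticAt_fun_sum
    intro j _
    exact ((analyticAt_mveval _ _).mul
      ((((analyticAt_const.mul analyticAt_id).mul (analyticAt_rcos x)).div analyticAt_const
        Real.pi_ne_zero).pow j)).mul ((analyticAt_rsin x).pow (n - j))
  -- Step C : identity theorem
  have hEq : Set.EqOn Q 0 Set.univ := by
    apply AnalyticOnNhd.eqOn_zero_of_preconnected_of_eventuallyEq_zero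
      (fun x _ => hQa x) isPreconnected_univ (Set.mem_univ (δ / 2))
    filter_upwards [Ioo_mem_nhds (by positivity : (0:ℝ) < δ / 2) (by linarith : δ / 2 < δ)]
      with θ hθ
    exact hQ0 θ hθ
  -- Step D : leading coefficient vanishes at (k+1)π
  have hlead : ∀ k : ℕ, MvPolynomial.eval ![((k : ℝ) + 1) * Real.pi] (p.coeff n) = 0 := by
    intro k
    set θk : ℝ := ((k : ℝ) + 1) * Real.pi with hθk
    have hsk : Real.sin θk = 0 := by
      have := Real.sin_nat_mul_pi (k + 1)
      push_cast at this
      rw [hθk]; exact_mod_cast this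
    have hck : Real.cos θk ≠ 0 := by
      intro h0
      have := Real.sin_sq_add_cos_sq θk
      rw [hsk, h0] at this
      norm_num at this
    have hθkpos : 0 < θk := by
      rw [hθk]; positivity
    have hQk : Q θk = 0 := hEq (Set.mem_univ θk)
    simp only [hQ] at hQk
    rw [Finset.sum_range_succ] at hQk
    have hzero : ∀ j ∈ Finset.range n,
        MvPolynomial.eval ![θk] (p.coeff j) * (2 * a * θk * Real.cos θk / Real.pi) ^ j *
          Real.sin θk ^ (n - j) = 0 := by
      intro j hj
      rw [hsk, zero_pow (Nat.sub_ne_zero_of_lt (Finset.mem_range.mp hj)), mul_zero]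
    rw [Finset.sum_eq_zero hzero, zero_add, Nat.sub_self, pow_zero, mul_one] at hQk
    have hfac : (2 * a * θk * Real.cos θk / Real.pi) ^ n ≠ 0 := by
      apply pow_ne_zero
      apply div_ne_zero _ Real.pi_ne_zero
      exact mul_ne_zero (by positivity) hck
    exact (mul_eq_zero.mp hQk).resolve_right hfac
  -- Step E : conclude
  have : p.coeff n = 0 := mv1_eq_zero _ hlead
  rwa [hn, Polynomial.coeff_natDegree, Polynomial.leadingCoeff_eq_zero] at this

/-- The quadratrix of Hippias is a transcendental (non-algebraic) curve: no nonzero real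
polynomial in two variables vanishes on its graph near `θ = 0`. -/
theorem quadratrix_not_algebraic (a : ℝ) (ha : 0 < a) :
    ¬ ∃ (P : MvPolynomial (Fin 2) ℝ) (ε : ℝ), P ≠ 0 ∧ 0 < ε ∧
      ∀ θ : ℝ, |θ| < ε →
        MvPolynomial.eval
          ![θ, if θ = 0 then 2 * a / Real.pi else (2 * a * θ) / (Real.pi * Real.tan θ)] P
          = 0 := by
  rintro ⟨P, ε, hP, hε, hval⟩
  set P₁ : MvPolynomial (Fin 2) ℝ := rename (Equiv.swap (0 : Fin 2) 1) P with hP₁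
  set p : Polynomial (MvPolynomial (Fin 1) ℝ) := finSuccEquiv ℝ 1 P₁ with hp
  have hp0 : p = 0 := by
    apply key a ε ha hε
    intro θ hθ1 hθ2
    have hθε : |θ| < ε := by
      rw [abs_of_pos hθ1]
      exact lt_of_lt_of_le hθ2 (min_le_left _ _)
    have hne : θ ≠ 0 := ne_of_gt hθ1
    have hv := hval θ hθε
    rw [if_neg hne] at hv
    set y : ℝ := 2 * a * θ / (Real.pi * Real.tan θ) with hy
    have e1 : MvPolynomial.eval (Fin.cons y ![θ] : Fin 2 → ℝ) P₁ =
        Polynomial.eval y (p.map (MvPolynomial.eval ![θ])) :=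
      eval_eq_eval_mv_eval' ![θ] y P₁
    have e2 : MvPolynomial.eval (Fin.cons y ![θ] : Fin 2 → ℝ) P₁ =
        MvPolynomial.eval ![θ, y] P := by
      have harg : ((Fin.cons y ![θ] : Fin 2 → ℝ) ∘ ⇑(Equiv.swap (0 : Fin 2) 1)) = ![θ, y] := by
        funext i
        fin_cases i <;> simp [Equiv.swap_apply_left, Equiv.swap_apply_right]
      rw [hP₁, eval_rename, harg]
    rw [← e1, e2]
    exact hv
  apply hP
  have hP₁0 : P₁ = 0 := by
    have := congrArg (finSuccEquiv ℝ 1).symm (hp ▸ hp0)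
    simpa using this
  have : rename (Equiv.swap (0 : Fin 2) 1) P = rename (Equiv.swap (0 : Fin 2) 1) 0 := by
    rw [← hP₁, hP₁0, map_zero]
  exact rename_injective _ (Equiv.swap (0 : Fin 2) 1).injective this
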